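/- arXiv:2306.10566 — 4 statements merged into one kernel-verified Lean document; each statement's English description precedes it below -/
import Mathlib

section
/- Let A be an Ext-finite abelian category and A an object with Ext^1(A,A)=0. If 0 → B → E → A' → 0 is a right semi-universal extension of B by A (i.e. A' ∈ add(A) and the connecting map Hom(A,A') → Ext^1(A,B) is surjective), then Ext^1(A,E)=0. -/
open CategoryTheory CategoryTheory.Limits CategoryTheory.Abelian

attribute [local instance] CategoryTheory.Abelian.hasFiniteBiproducts

universe w v u u'

namespace WideSub

variable {C : Type u} [Category.{v} C] [Abelian C]

section Ext

variable [HasExt.{w} C]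

/-- An abelian category is hereditary if `Ext²` vanishes identically. -/
def Hereditary (C : Type u) [Category.{v} C] [Abelian C] [HasExt.{w} C] : Prop :=
  ∀ X Y : C, Subsingleton (Abelian.Ext X Y 2)

/-- An object is rigid if `Ext¹(X,X) = 0`. -/
def Rigid (X : C) : Prop := Subsingleton (Abelian.Ext X X 1)

/-- An object is exceptional if it is rigid and each nonzero endomorphism is invertible
(i.e. its endomorphism ring is a division algebra). -/
def IsExceptional (X : C) : Prop :=
  Rigid X ∧ ∀ f : X ⟶ X, f ≠ 0 → IsIso f

/-- `(E 0, ..., E (n-1))` is an exceptional sequence: each object is exceptional and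
`Hom(Eᵢ, Eⱼ) = 0 = Ext^p(Eᵢ, Eⱼ)` for `i > j`, `p ≥ 1`. -/
def ExceptionalSeq {n : ℕ} (E : Fin n → C) : Prop :=
  (∀ i, IsExceptional (E i)) ∧
    ∀ i j : Fin n, j < i →
      (∀ f : E i ⟶ E j, f = 0) ∧ ∀ p : ℕ, 1 ≤ p → Subsingleton (Abelian.Ext (E i) (E j) p)

/-- The right perpendicular category of a class of objects. -/
def rightPerp (𝒳 : Set C) : Set C :=
  {A | ∀ X ∈ 𝒳, (∀ f : X ⟶ A, f = 0) ∧ Subsingleton (Abelian.Ext X A 1)}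

/-- The left perpendicular category of a class of objects. -/
def leftPerp (𝒳 : Set C) : Set C :=
  {A | ∀ X ∈ 𝒳, (∀ f : A ⟶ X, f = 0) ∧ Subsingleton (Abelian.Ext A X 1)}

end Ext

/-- A wide subcategory: closed under isomorphisms, kernels, cokernels and extensions. -/
def IsWide (W : Set C) : Prop :=
  (∀ X Y : C, Nonempty (X ≅ Y) → X ∈ W → Y ∈ W) ∧
  (∀ (X Y : C) (f : X ⟶ Y), X ∈ W → Y ∈ W → kernel f ∈ W) ∧
  (∀ (X Y : C) (f : X ⟶ Y), X ∈ W → Y ∈ W → cokernel f ∈ W) ∧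
  (∀ S : ShortComplex C, S.ShortExact → S.X₁ ∈ W → S.X₃ ∈ W → S.X₂ ∈ W)

/-- The smallest wide subcategory containing a class of objects. -/
def wideClosure (𝒳 : Set C) : Set C :=
  {A | ∀ W : Set C, IsWide W → 𝒳 ⊆ W → A ∈ W}

section Ext

variable [HasExt.{w} C]

/-- `(𝒳, 𝒴)` is an Ext-orthogonal pair. -/
def ExtOrthPair (𝒳 𝒴 : Set C) : Prop :=
  rightPerp 𝒳 = 𝒴 ∧ leftPerp 𝒴 = 𝒳

/-- `(𝒳, 𝒴)` is an Ext-orthogonal pair relative to the wide subcategory `W`. -/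
def ExtOrthPairIn (W 𝒳 𝒴 : Set C) : Prop :=
  rightPerp 𝒳 ∩ W = 𝒴 ∧ leftPerp 𝒴 ∩ W = 𝒳

end Ext

/-- `M` fits into a five-term exact sequence `0 → Y¹ → X₀ → M → Y⁰ → X₁ → 0` with
`X₀, X₁ ∈ 𝒳` and `Y⁰, Y¹ ∈ 𝒴`. -/
def FiveTerm (𝒳 𝒴 : Set C) (M : C) : Prop :=
  ∃ (Y1 X0 Y0 X1 : C) (a : Y1 ⟶ X0) (b : X0 ⟶ M) (c : M ⟶ Y0) (d : Y0 ⟶ X1)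
    (w₁ : a ≫ b = 0) (w₂ : b ≫ c = 0) (w₃ : c ≫ d = 0),
      Y1 ∈ 𝒴 ∧ X0 ∈ 𝒳 ∧ Y0 ∈ 𝒴 ∧ X1 ∈ 𝒳 ∧ Mono a ∧ Epi d ∧
      (ShortComplex.mk a b w₁).Exact ∧ (ShortComplex.mk b c w₂).Exact ∧
      (ShortComplex.mk c d w₃).Exact

section Ext

variable [HasExt.{w} C]

/-- A complete Ext-orthogonal pair. -/
def CompleteExtOrthPair (𝒳 𝒴 : Set C) : Prop :=
  ExtOrthPair 𝒳 𝒴 ∧ ∀ M : C, FiveTerm 𝒳 𝒴 M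

/-- A complete Ext-orthogonal pair relative to the wide subcategory `W`. -/
def CompleteExtOrthPairIn (W 𝒳 𝒴 : Set C) : Prop :=
  ExtOrthPairIn W 𝒳 𝒴 ∧ ∀ M ∈ W, FiveTerm 𝒳 𝒴 M

end Ext

/-- `P` belongs to `add A`: it is a direct summand of a finite direct sum of copies of `A`. -/
def memAdd (A P : C) : Prop :=
  ∃ (m : ℕ) (i : P ⟶ ⨁ (fun _ : Fin m => A)) (r : (⨁ (fun _ : Fin m => A)) ⟶ P),
    i ≫ r = 𝟙 P

/-- `P` belongs to the additive closure of a set `𝒮` of objects. -/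
def memAddSet (𝒮 : Set C) (P : C) : Prop :=
  ∃ (m : ℕ) (G : Fin m → C) (_ : ∀ i, G i ∈ 𝒮) (i : P ⟶ ⨁ G) (r : (⨁ G) ⟶ P),
    i ≫ r = 𝟙 P

section Linear

variable (k : Type u') [Field k] [Linear k C]

/-- Hom-finiteness over the field `k`. -/
def HomFinite : Prop := ∀ X Y : C, FiniteDimensional k (X ⟶ Y)

/-- Ext-finiteness over the field `k`: each Ext-group carries the structure of a
finite-dimensional `k`-vector space. -/
def ExtFinite [HasExt.{w} C] : Prop :=
  (∀ X Y : C, FiniteDimensional k (X ⟶ Y)) ∧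
  ∀ (X Y : C) (n : ℕ), ∃ _i : Module k (Abelian.Ext X Y n),
    @Module.Finite k (Abelian.Ext X Y n) _ _ _i

end Linear

/-- `X` has a composition series of length `n`. -/
def HasLength (X : C) (n : ℕ) : Prop :=
  ∃ s : Fin (n + 1) → Subobject X,
    s 0 = ⊥ ∧ s (Fin.last n) = ⊤ ∧ ∀ i : Fin n, s i.castSucc ⋖ s i.succ

/-- `X` is uniserial: its subobjects form a chain. -/
def UniserialObj (X : C) : Prop := ∀ A B : Subobject X, A ≤ B ∨ B ≤ A

/-- A length category: every object has finite length. -/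
def LengthCat (C : Type u) [Category.{v} C] [Abelian C] : Prop :=
  ∀ X : C, ∃ n, HasLength X n

/-- A uniserial category: a length category all of whose indecomposables are uniserial. -/
def UniserialCat (C : Type u) [Category.{v} C] [Abelian C] : Prop :=
  LengthCat C ∧ ∀ X : C, Indecomposable X → UniserialObj X

/-- `S` is (isomorphic to) a composition factor of `X`. -/
def IsCompFactor (X S : C) : Prop :=
  Simple S ∧ ∃ (A B : Subobject X) (h : A ≤ B),
    Nonempty (cokernel (Subobject.ofLE A B h) ≅ S)

/-- `T` is a simple quotient of `X` (for `X` uniserial indecomposable, this means `T ≅ top X`). -/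
def IsSimpleQuot (X T : C) : Prop := Simple T ∧ ∃ π : X ⟶ T, Epi π

/-- `T` is a simple subobject of `X` (for `X` uniserial, this means `T ≅ soc X`). -/
def IsSimpleSub (X T : C) : Prop := Simple T ∧ ∃ ι : T ⟶ X, Mono ι

/-- Connectedness of an additive category: there is no splitting of the indecomposable
objects into two nonzero Hom-orthogonal classes. -/
def ConnectedAdd (C : Type u) [Category.{v} C] [Abelian C] : Prop :=
  ¬ ∃ P Q : Set C,
    (∃ X ∈ P, ¬ IsZero X) ∧ (∃ Y ∈ Q, ¬ IsZero Y) ∧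
    (∀ X ∈ P, ∀ Y ∈ Q, (∀ f : X ⟶ Y, f = 0) ∧ (∀ g : Y ⟶ X, g = 0)) ∧
    (∀ Z : C, Indecomposable Z → Z ∈ P ∨ Z ∈ Q)

section Serre

variable (k : Type u') [Field k] [Linear k C] [HasExt.{w} C]

/-- Serre duality `Ext¹(X,Y) ≅ D Hom(Y, τX)` with respect to an endofunctor `τ`. -/
def SerreDuality (τ : C ⥤ C) : Prop :=
  ∀ X Y : C, Nonempty (Abelian.Ext X Y 1 ≃+ Module.Dual k (Y ⟶ τ.obj X))

/-- The data of a tube of rank `n`: a uniserial hereditary abelian category with Serre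
duality whose AR-translate `τ` permutes the `n` simple objects cyclically. -/
structure TubeData (n : ℕ) where
  npos : 0 < n
  τ : C ⥤ C
  isEquiv : τ.IsEquivalence
  serre : SerreDuality k τ
  S : Fin n → C
  simple : ∀ i, Simple (S i)
  all_simple : ∀ T : C, Simple T → ∃ i, Nonempty (T ≅ S i)
  distinct : ∀ i j, Nonempty (S i ≅ S j) → i = j
  tau_shift : ∀ i : Fin n, Nonempty (τ.obj (S i) ≅ S ⟨(i.val + (n - 1)) % n, Nat.mod_lt _ npos⟩)

end Serre

end WideSub

/-!
By the long exact sequence of `Ext¹(A, -)`, since `Ext¹(A, A') = 0` (it is a retract of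
`Ext¹(A, Aⁿ) = Ext¹(A, A)ⁿ = 0`) every class in `Ext¹(A, E)` comes from `Ext¹(A, B)`. By
surjectivity of the connecting map it is `δ f` for some `f : A ⟶ A'`, and `δ` followed by
`Ext¹(A, B) → Ext¹(A, E)` is zero.
-/

namespace CategoryTheory.Abelian.Ext

variable {C : Type u} [Category.{v} C] [Abelian C] [HasExt.{w} C]

lemma subsingleton_of_retract {X Y Z : C} {n : ℕ} (i : Y ⟶ Z) (r : Z ⟶ Y) (hir : i ≫ r = 𝟙 Y)
    [Subsingleton (Ext X Z n)] : Subsingleton (Ext X Y n) where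
  allEq a b := by
    have hfactor : ∀ e : Ext X Y n,
        (e.comp (mk₀ i) (add_zero n)).comp (mk₀ r) (add_zero n) = e := fun e => by
      rw [comp_assoc_of_third_deg_zero, mk₀_comp_mk₀, hir, comp_mk₀_id]
    rw [← hfactor a, ← hfactor b, Subsingleton.elim (a.comp (mk₀ i) _) (b.comp (mk₀ i) _)]

instance subsingleton_biproduct (X : C) {J : Type*} [Fintype J] (Y : J → C) (n : ℕ)
    [∀ j, Subsingleton (Ext X (Y j) n)] : Subsingleton (Ext X (⨁ Y) n) :=
  (addEquivBiproduct X (biproduct.isBilimit Y) n).toEquiv.subsingleton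

lemma subsingleton_of_shortExact {S : ShortComplex C} (hS : S.ShortExact) (A : C)
    [Subsingleton (Ext A S.X₃ 1)]
    (hsurj : Function.Surjective fun f : A ⟶ S.X₃ => (mk₀ f).comp hS.extClass (zero_add 1)) :
    Subsingleton (Ext A S.X₂ 1) := by
  suffices h : ∀ x : Ext A S.X₂ 1, x = 0 from ⟨fun a b => by rw [h a, h b]⟩
  intro x
  obtain ⟨x₁, rfl⟩ := covariant_sequence_exact₂ A hS x (Subsingleton.elim _ _)
  obtain ⟨f, rfl⟩ := hsurj x₁
  rw [comp_assoc _ _ _ (zero_add 1) (add_zero 1) (by omega), hS.extClass_comp, comp_zero]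

end CategoryTheory.Abelian.Ext

namespace WideSub

lemma subsingleton_ext_of_memAdd {C : Type u} [Category.{v} C] [Abelian C] [HasExt.{w} C]
    {A P : C} (hA : Rigid A) (hP : memAdd A P) : Subsingleton (Abelian.Ext A P 1) := by
  obtain ⟨m, i, r, hir⟩ := hP
  have : Subsingleton (Abelian.Ext A A 1) := hA
  exact Abelian.Ext.subsingleton_of_retract i r hir

theorem stmt0_general {C : Type u} [Category.{v} C] [Abelian C] [HasExt.{w} C]
    (A : C) (hA : Rigid A)
    (S : ShortComplex C) (hS : S.ShortExact) (hadd : memAdd A S.X₃)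
    (hsurj : Function.Surjective
      (fun f : A ⟶ S.X₃ => (Abelian.Ext.mk₀ f).comp hS.extClass (zero_add 1))) :
    Subsingleton (Abelian.Ext A S.X₂ 1) :=
  have := subsingleton_ext_of_memAdd hA hadd
  Abelian.Ext.subsingleton_of_shortExact hS A hsurj

theorem stmt0 {C : Type u} [Category.{v} C] [Abelian C] [HasExt.{w} C]
    (k : Type u') [Field k] [Linear k C] (hfin : ExtFinite (C := C) k)
    (A : C) (hA : Rigid A)
    (S : ShortComplex C) (hS : S.ShortExact) (hadd : memAdd A S.X₃)
    (hsurj : Function.Surjective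
      (fun f : A ⟶ S.X₃ => (Abelian.Ext.mk₀ f).comp hS.extClass (zero_add 1))) :
    Subsingleton (Abelian.Ext A S.X₂ 1) :=
  stmt0_general A hA S hS hadd hsurj

end WideSub
end

section
/- Let H be a hereditary abelian category and W a wide subcategory such that every object M of H fits into an exact sequence 0 → Y¹ → X₀ → M → Y⁰ → X₁ → 0 with X₀, X₁ ∈ W and Y⁰, Y¹ ∈ W^⊥. Then (W, W^⊥) is a complete Ext-orthogonal pair; in particular W = ^⊥(W^⊥). -/
open CategoryTheory CategoryTheory.Limits CategoryTheory.Abelian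

attribute [local instance] CategoryTheory.Abelian.hasFiniteBiproducts

universe w v u u'

namespace WideSub

variable {C : Type u} [Category.{v} C] [Abelian C]

section Perp

variable [HasExt.{w} C]

lemma exists_retraction_of_subsingleton_ext {S : ShortComplex C} (hS : S.ShortExact)
    [Subsingleton (Ext S.X₃ S.X₁ 1)] : ∃ r : S.X₂ ⟶ S.X₁, S.f ≫ r = 𝟙 S.X₁ := by
  obtain ⟨x, hx⟩ := Ext.contravariant_sequence_exact₁ hS _ (Ext.mk₀ (𝟙 S.X₁)) (add_zero 1)
    (Subsingleton.elim _ _)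
  obtain ⟨r, rfl⟩ := (Ext.mk₀_bijective _ _).2 x
  exact ⟨r, (Ext.mk₀_bijective _ _).1 (by rwa [Ext.mk₀_comp_mk₀] at hx)⟩

/-- The sequence `0 → S.X₁ → S.X₂ → S.X₃ → 0` splits, and its splitting `S.X₂ → S.X₁` vanishes. -/
lemma isZero_X₁_of_subsingleton_ext {S : ShortComplex C} (hS : S.ShortExact)
    [Subsingleton (Ext S.X₃ S.X₁ 1)] (hhom : ∀ f : S.X₂ ⟶ S.X₁, f = 0) : IsZero S.X₁ := by
  obtain ⟨r, hr⟩ := exists_retraction_of_subsingleton_ext hS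
  rw [IsZero.iff_id_eq_zero, ← hr, hhom r, comp_zero]

lemma subset_leftPerp_rightPerp (𝒳 : Set C) : 𝒳 ⊆ leftPerp (rightPerp 𝒳) :=
  fun X hX _ hY => hY X hX

/-- For `M ∈ ⊥(W⊥)` the map `M → Y⁰` vanishes, so `0 → Y¹ → X₀ → M → 0` is short exact;
it then forces `Y¹ = 0`, hence `X₀ ≅ M`. -/
lemma leftPerp_rightPerp_subset {W : Set C}
    (hiso : ∀ X Y : C, Nonempty (X ≅ Y) → X ∈ W → Y ∈ W)
    (h5 : ∀ M : C, FiveTerm W (rightPerp W) M) : leftPerp (rightPerp W) ⊆ W := by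
  intro M hM
  obtain ⟨Y1, X0, Y0, X1, a, b, c, d, w₁, w₂, w₃, hY1, hX0, hY0, -, ha, -, ex₁, ex₂, -⟩ := h5 M
  have : Epi b := (ex₂.epi_f_iff).2 ((hM Y0 hY0).1 c)
  have hS : (ShortComplex.mk a b w₁).ShortExact := { exact := ex₁ }
  have : Subsingleton (Ext M Y1 1) := (hM Y1 hY1).2
  have hY1_zero : IsZero Y1 := isZero_X₁_of_subsingleton_ext hS (hY1 X0 hX0).1
  have : Mono b := (ex₁.mono_g_iff).2 (hY1_zero.eq_of_src a 0)
  have : IsIso b := isIso_of_mono_of_epi b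
  exact hiso X0 M ⟨asIso b⟩ hX0

end Perp

theorem stmt6_general {C : Type u} [Category.{v} C] [Abelian C] [HasExt.{w} C]
    (W : Set C) (hW : IsWide W)
    (h5 : ∀ M : C, FiveTerm W (rightPerp W) M) :
    CompleteExtOrthPair W (rightPerp W) :=
  ⟨⟨rfl, (leftPerp_rightPerp_subset hW.1 h5).antisymm (subset_leftPerp_rightPerp W)⟩, h5⟩

theorem stmt6 {C : Type u} [Category.{v} C] [Abelian C] [HasExt.{w} C]
    (hher : Hereditary C) (W : Set C) (hW : IsWide W)
    (h5 : ∀ M : C, FiveTerm W (rightPerp W) M) :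
    CompleteExtOrthPair W (rightPerp W) :=
  stmt6_general W hW h5

end WideSub
end

section
/- Let (X,Y) be a complete Ext-orthogonal pair in a hereditary abelian category H, and let W be a wide subcategory of H containing X. Then (X, W ∩ Y) is a complete Ext-orthogonal pair in W. -/
open CategoryTheory CategoryTheory.Limits CategoryTheory.Abelian

attribute [local instance] CategoryTheory.Abelian.hasFiniteBiproducts

universe w v u u'

namespace WideSub

variable {C : Type u} [Category.{v} C] [Abelian C]

/-! The five-term sequence of `M ∈ W` already lies in `W`: `Y¹` is the kernel of a map
between objects of `W`, and `Y⁰` is an extension of `X₁` by the cokernel of `X₀ → M`.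
If moreover `M` is left perpendicular to `W ∩ 𝒴`, then `M → Y⁰` vanishes and
`0 → Y¹ → X₀ → M → 0` splits, so `M` inherits left perpendicularity to `𝒴` from `X₀`. -/

namespace IsWide

variable {W : Set C}

lemma mem_of_iso (hW : IsWide W) {X Y : C} (e : X ≅ Y) (hX : X ∈ W) : Y ∈ W :=
  hW.1 X Y ⟨e⟩ hX

lemma X₁_mem_of_exact (hW : IsWide W) {S : ShortComplex C} (hS : S.Exact) [Mono S.f]
    (h₂ : S.X₂ ∈ W) (h₃ : S.X₃ ∈ W) : S.X₁ ∈ W :=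
  hW.mem_of_iso (IsLimit.conePointUniqueUpToIso (limit.isLimit _) hS.fIsKernel)
    (hW.2.1 _ _ S.g h₂ h₃)

lemma X₃_mem_of_exact (hW : IsWide W) {S : ShortComplex C} (hS : S.Exact) [Epi S.g]
    (h₁ : S.X₁ ∈ W) (h₂ : S.X₂ ∈ W) : S.X₃ ∈ W :=
  hW.mem_of_iso (IsColimit.coconePointUniqueUpToIso (colimit.isColimit _) hS.gIsCokernel)
    (hW.2.2.1 _ _ S.f h₁ h₂)

lemma X₂_mem_of_shortExact (hW : IsWide W) {S : ShortComplex C} (hS : S.ShortExact)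
    (h₁ : S.X₁ ∈ W) (h₃ : S.X₃ ∈ W) : S.X₂ ∈ W :=
  hW.2.2.2 S hS h₁ h₃

lemma mem_of_exact_of_exact_of_epi (hW : IsWide W) {A M Y Z : C} {b : A ⟶ M} {c : M ⟶ Y}
    {d : Y ⟶ Z} {hbc : b ≫ c = 0} {hcd : c ≫ d = 0}
    (hexM : (ShortComplex.mk b c hbc).Exact) (hexY : (ShortComplex.mk c d hcd).Exact) [Epi d]
    (hA : A ∈ W) (hM : M ∈ W) (hZ : Z ∈ W) : Y ∈ W := by
  let S := ShortComplex.mk b (kernel.lift d c hcd) (by simp [← cancel_mono (kernel.ι d), hbc])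
  have : Epi S.g := (ShortComplex.exact_iff_epi_kernel_lift _).mp hexY
  have hS : S.Exact := by
    rwa [ShortComplex.exact_iff_of_epi_of_isIso_of_mono (S₂ := ShortComplex.mk b c hbc)
      { τ₁ := 𝟙 A, τ₂ := 𝟙 M, τ₃ := kernel.ι d }]
  have hker : kernel d ∈ W := hW.X₃_mem_of_exact hS hA hM
  exact hW.X₂_mem_of_shortExact
    (S := ShortComplex.mk (kernel.ι d) d (kernel.condition d))
    { exact := ShortComplex.exact_of_f_is_kernel _ (kernelIsKernel d) } hker hZ

end IsWide

lemma FiveTerm.inter_of_isWide {𝒳 𝒴 W : Set C} {M : C} (h : FiveTerm 𝒳 𝒴 M)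
    (hW : IsWide W) (hXW : 𝒳 ⊆ W) (hM : M ∈ W) : FiveTerm 𝒳 (W ∩ 𝒴) M := by
  obtain ⟨Y1, X0, Y0, X1, a, b, c, d, w₁, w₂, w₃, hY1, hX0, hY0, hX1, ha, hd,
    hex₁, hex₂, hex₃⟩ := h
  have hY1W : Y1 ∈ W := hW.X₁_mem_of_exact (S := ShortComplex.mk a b w₁) hex₁ (hXW hX0) hM
  have hY0W : Y0 ∈ W := hW.mem_of_exact_of_exact_of_epi hex₂ hex₃ (hXW hX0) hM (hXW hX1)
  exact ⟨Y1, X0, Y0, X1, a, b, c, d, w₁, w₂, w₃, ⟨hY1W, hY1⟩, hX0, ⟨hY0W, hY0⟩, hX1,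
    ha, hd, hex₁, hex₂, hex₃⟩

section Ext

variable [HasExt.{w} C]

lemma leftPerp_anti {𝒴 𝒴' : Set C} (h : 𝒴' ⊆ 𝒴) : leftPerp 𝒴 ⊆ leftPerp 𝒴' :=
  fun _ hM Y hY => hM Y (h hY)

lemma mem_leftPerp_of_shortExact {𝒴 : Set C} {S : ShortComplex C} (hS : S.ShortExact)
    (hsplit : hS.extClass = 0) (h₂ : S.X₂ ∈ leftPerp 𝒴) : S.X₃ ∈ leftPerp 𝒴 := by
  have := hS.epi_g
  intro Y hY
  obtain ⟨hHom, hExt⟩ := h₂ Y hY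
  refine ⟨fun f => by rw [← cancel_epi S.g, comp_zero]; exact hHom _, ?_⟩
  suffices ∀ e : Abelian.Ext S.X₃ Y 1, e = 0 from ⟨fun e₁ e₂ => by rw [this e₁, this e₂]⟩
  intro e
  -- `e` restricts to zero on `S.X₂`, so it comes from `Hom(S.X₁, Y)` through `extClass = 0`.
  obtain ⟨e₁, rfl⟩ := Ext.contravariant_sequence_exact₃ hS Y e (Subsingleton.elim _ _)
    (add_zero 1)
  simp [hsplit]

lemma mem_leftPerp_of_fiveTerm {𝒳 𝒴 𝒴' : Set C} {M : C} (hX : 𝒳 ⊆ leftPerp 𝒴)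
    (h : FiveTerm 𝒳 𝒴' M) (hM : M ∈ leftPerp 𝒴') : M ∈ leftPerp 𝒴 := by
  obtain ⟨Y1, X0, Y0, X1, a, b, c, d, w₁, w₂, w₃, hY1, hX0, hY0, -, ha, -,
    hex₁, hex₂, -⟩ := h
  have : Epi b := (ShortComplex.exact_iff_epi _ ((hM Y0 hY0).1 c)).mp hex₂
  have hS : (ShortComplex.mk a b w₁).ShortExact := { exact := hex₁ }
  have : Subsingleton (Abelian.Ext M Y1 1) := (hM Y1 hY1).2
  exact mem_leftPerp_of_shortExact hS (Subsingleton.elim _ _) (hX hX0)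

end Ext

theorem stmt7_general {C : Type u} [Category.{v} C] [Abelian C] [HasExt.{w} C]
    (𝒳 𝒴 W : Set C)
    (hpair : CompleteExtOrthPair 𝒳 𝒴) (hW : IsWide W) (hXW : 𝒳 ⊆ W) :
    CompleteExtOrthPairIn W 𝒳 (W ∩ 𝒴) := by
  obtain ⟨⟨hr, hl⟩, hcomp⟩ := hpair
  have hfive : ∀ M ∈ W, FiveTerm 𝒳 (W ∩ 𝒴) M := fun M hM =>
    (hcomp M).inter_of_isWide hW hXW hM
  refine ⟨⟨by rw [hr, Set.inter_comm], ?_⟩, hfive⟩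
  apply Set.Subset.antisymm
  · rintro M ⟨hM, hMW⟩
    rw [← hl]
    exact mem_leftPerp_of_fiveTerm hl.ge (hfive M hMW) hM
  · exact fun M hM => ⟨leftPerp_anti Set.inter_subset_right (hl.ge hM), hXW hM⟩

theorem stmt7 {C : Type u} [Category.{v} C] [Abelian C] [HasExt.{w} C]
    (hher : Hereditary C) (𝒳 𝒴 W : Set C)
    (hpair : CompleteExtOrthPair 𝒳 𝒴) (hW : IsWide W) (hXW : 𝒳 ⊆ W) :
    CompleteExtOrthPairIn W 𝒳 (W ∩ 𝒴) :=
  stmt7_general 𝒳 𝒴 W hpair hW hXW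

end WideSub
end

section
/- Let A be a poset and A₁, A₂ full subposets such that A = A₁ ∪ A₂ and every comparable pair (x ≤ y) in A lies entirely in A₁ or entirely in A₂. Then the commutative square of inclusions with corners A₁ ∩ A₂, A₁, A₂, A is a pushout in the category of posets. -/
/-! The gluing of `f₁` and `f₂` is monotone because every comparable pair lies in a single
piece, where it is compared by `f₁` or by `f₂`; it is unique because `A₁ ∪ A₂ = A`. -/

universe u u'

namespace WideSub

open Set

section Glue

variable {A : Type u} {B : Type u'} {A₁ A₂ : Set A}

open Classical in
noncomputable def glue (hcover : A₁ ∪ A₂ = univ) (f₁ : A₁ → B) (f₂ : A₂ → B) (x : A) : B :=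
  if h : x ∈ A₁ then f₁ ⟨x, h⟩
  else f₂ ⟨x, (hcover ▸ mem_univ x : x ∈ A₁ ∪ A₂).resolve_left h⟩

theorem glue_of_mem_left (hcover : A₁ ∪ A₂ = univ) (f₁ : A₁ → B) (f₂ : A₂ → B)
    (x : A) (h : x ∈ A₁) : glue hcover f₁ f₂ x = f₁ ⟨x, h⟩ :=
  dif_pos h

theorem glue_of_mem_right (hcover : A₁ ∪ A₂ = univ) {f₁ : A₁ → B} {f₂ : A₂ → B}
    (hagree : ∀ (x : A) (h₁ : x ∈ A₁) (h₂ : x ∈ A₂), f₁ ⟨x, h₁⟩ = f₂ ⟨x, h₂⟩)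
    (x : A) (h : x ∈ A₂) : glue hcover f₁ f₂ x = f₂ ⟨x, h⟩ := by
  by_cases h₁ : x ∈ A₁
  · rw [glue_of_mem_left hcover f₁ f₂ x h₁, hagree x h₁ h]
  · exact dif_neg h₁

theorem eq_of_eqOn_of_union_eq_univ (hcover : A₁ ∪ A₂ = univ) {g g' : A → B}
    (h₁ : EqOn g g' A₁) (h₂ : EqOn g g' A₂) : g = g' :=
  funext fun x => h₁.union h₂ (hcover ▸ mem_univ x)

end Glue

theorem monotone_of_monotoneOn_of_comparable_mem {A : Type u} {B : Type u'} [Preorder A] [Preorder B]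
    {A₁ A₂ : Set A} (hord : ∀ x y : A, x ≤ y → (x ∈ A₁ ∧ y ∈ A₁) ∨ (x ∈ A₂ ∧ y ∈ A₂))
    {g : A → B} (h₁ : MonotoneOn g A₁) (h₂ : MonotoneOn g A₂) : Monotone g := by
  intro x y hxy
  rcases hord x y hxy with ⟨hx, hy⟩ | ⟨hx, hy⟩
  · exact h₁ hx hy hxy
  · exact h₂ hx hy hxy

theorem monotoneOn_of_restrict_eq {A : Type u} {B : Type u'} [Preorder A] [Preorder B]
    {s : Set A} {f : s → B} (hf : Monotone f) {g : A → B}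
    (hg : ∀ (x : A) (h : x ∈ s), g x = f ⟨x, h⟩) :
    MonotoneOn g s := by
  intro x hx y hy hxy
  rw [hg x hx, hg y hy]
  exact hf hxy

theorem stmt19 {A : Type u} [PartialOrder A] (A₁ A₂ : Set A)
    (hcover : A₁ ∪ A₂ = Set.univ)
    (hord : ∀ x y : A, x ≤ y → (x ∈ A₁ ∧ y ∈ A₁) ∨ (x ∈ A₂ ∧ y ∈ A₂))
    (B : Type u') [PartialOrder B]
    (f₁ : A₁ → B) (f₂ : A₂ → B) (hf₁ : Monotone f₁) (hf₂ : Monotone f₂)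
    (hagree : ∀ (x : A) (h₁ : x ∈ A₁) (h₂ : x ∈ A₂), f₁ ⟨x, h₁⟩ = f₂ ⟨x, h₂⟩) :
    ∃! g : A → B, Monotone g ∧ (∀ (x : A) (h : x ∈ A₁), g x = f₁ ⟨x, h⟩) ∧
      (∀ (x : A) (h : x ∈ A₂), g x = f₂ ⟨x, h⟩) := by
  have hg₁ := glue_of_mem_left hcover f₁ f₂
  have hg₂ := glue_of_mem_right hcover hagree
  refine ⟨glue hcover f₁ f₂, ⟨?_, hg₁, hg₂⟩, ?_⟩
  · exact monotone_of_monotoneOn_of_comparable_mem hord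
      (monotoneOn_of_restrict_eq hf₁ hg₁) (monotoneOn_of_restrict_eq hf₂ hg₂)
  · rintro g ⟨-, hg₁', hg₂'⟩
    refine eq_of_eqOn_of_union_eq_univ hcover (fun x hx => ?_) (fun x hx => ?_)
    · rw [hg₁' x hx, hg₁ x hx]
    · rw [hg₂' x hx, hg₂ x hx]

end WideSub
end
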